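/- arXiv:2504.05039 — 9 statements merged into one kernel-verified Lean document; each statement's English description precedes it below -/
import Mathlib

section
/- Let X be a finite set and 𝓗 a family of subsets of X. Let 𝓗* be the set of maximal elements of 𝓗 under inclusion. If a graph Q' on vertex set 𝓗* has the property that for every K in a family 𝓚 of subsets of X, the set {H ∈ 𝓗* : H ∩ K ≠ ∅} induces a connected subgraph of Q', then the graph Q on vertex set 𝓗 obtained from Q' by attaching each H ∈ 𝓗 \ 𝓗* as a pendant (degree-one) vertex adjacent to some maximal H' ∈ 𝓗* with H ⊆ H', has the property that for every K ∈ 𝓚, the set {H ∈ 𝓗 : H ∩ K ≠ ∅} induces a connected subgraph of Q. -/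
open scoped ENNReal

/-- A tree decomposition of a graph `G`: a tree `T` with bags `bag i ⊆ V` such that
every vertex appears in a bag, every edge lies in a bag, and the bags containing a
fixed vertex form a connected subtree. -/
def IsTreeDecomp {V ι : Type} (G : SimpleGraph V) (T : SimpleGraph ι) (bag : ι → Set V) : Prop :=
  T.IsTree ∧ (∀ v, ∃ i, v ∈ bag i) ∧
    (∀ u v, G.Adj u v → ∃ i, u ∈ bag i ∧ v ∈ bag i) ∧
    (∀ v, (T.induce {i | v ∈ bag i}).Connected)

/-- Width of a tree decomposition: (max bag size) − 1. -/
noncomputable def decompWidth {V ι : Type} (bag : ι → Set V) : ℕ∞ :=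
  (⨆ i, (bag i).encard) - 1

/-- Treewidth: the infimum of widths of tree decompositions. -/
noncomputable def treewidth {V : Type} (G : SimpleGraph V) : ℕ∞ :=
  sInf {w : ℕ∞ | ∃ (ι : Type) (T : SimpleGraph ι) (bag : ι → Set V),
    IsTreeDecomp G T bag ∧ w = decompWidth bag}

/-- A family of vertex sets is non-piercing in `G` if every pairwise difference
(when nonempty) induces a connected subgraph of `G`. -/
def NonPiercing {V : Type} (G : SimpleGraph V) (F : Set (Set V)) : Prop :=
  ∀ H ∈ F, ∀ H' ∈ F, (H \ H').Nonempty → (G.induce (H \ H')).Connected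

/-- Outerplanarity via a one-page (circular, non-crossing) layout. -/
def Outerplanar {α : Type} (Q : SimpleGraph α) : Prop :=
  ∃ f : α → ℕ, Function.Injective f ∧
    ∀ a b c d : α, Q.Adj a b → Q.Adj c d →
      ¬ (f a < f c ∧ f c < f b ∧ f b < f d)

/-- `a, b, c` appear in this (clockwise) cyclic order on the cycle `Fin n`. -/
def Cyc3 {n : ℕ} (a b c : Fin n) : Prop :=
  (a < b ∧ b < c) ∨ (b < c ∧ c < a) ∨ (c < a ∧ a < b)

/-- `a, b, c, d` appear in this (clockwise) cyclic order on the cycle `Fin n`. -/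
def Cyc4 {n : ℕ} (a b c d : Fin n) : Prop :=
  (a < b ∧ b < c ∧ c < d) ∨ (b < c ∧ c < d ∧ d < a) ∨
    (c < d ∧ d < a ∧ a < b) ∨ (d < a ∧ a < b ∧ b < c)

/-- Open arc of vertices strictly between `u` and `v` clockwise. -/
def arcO {n : ℕ} (u v : Fin n) : Set (Fin n) := {w | Cyc3 u w v}

/-- Closed arc of vertices from `u` to `v` clockwise (inclusive). -/
def arcC {n : ℕ} (u v : Fin n) : Set (Fin n) := {u} ∪ {v} ∪ {w | Cyc3 u w v}

/-- The cycle system is `axax`-free. -/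
def AxaxFree {n : ℕ} (F : Set (Set (Fin n))) : Prop :=
  ¬ ∃ H ∈ F, ∃ H' ∈ F, ∃ a₁ x₁ a₂ x₂ : Fin n,
    Cyc4 a₁ x₁ a₂ x₂ ∧ a₁ ∈ H \ H' ∧ a₂ ∈ H \ H' ∧ x₁ ∈ H' ∧ x₂ ∈ H'

/-- The cycle system is `abab`-free. -/
def AbabFree {n : ℕ} (F : Set (Set (Fin n))) : Prop :=
  ¬ ∃ H ∈ F, ∃ H' ∈ F, ∃ a₁ b₁ a₂ b₂ : Fin n,
    Cyc4 a₁ b₁ a₂ b₂ ∧ a₁ ∈ H \ H' ∧ a₂ ∈ H \ H' ∧ b₁ ∈ H' \ H ∧ b₂ ∈ H' \ H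

/-- The vertices appearing in bags of the component of `T` minus the edge `{x,y}`
that contains `x` (the `x`-side of the tree decomposition). -/
def sideVerts {V ι : Type} (T : SimpleGraph ι) (bag : ι → Set V) (x y : ι) : Set V :=
  ⋃ i ∈ {i | (T.deleteEdges {s(x, y)}).Reachable x i}, bag i

/-- Adjacency in the `N × N` grid graph. -/
def gridAdj {N : ℕ} (p q : Fin N × Fin N) : Prop :=
  (p.1 = q.1 ∧ (p.2.val + 1 = q.2.val ∨ q.2.val + 1 = p.2.val)) ∨
    (p.2 = q.2 ∧ (p.1.val + 1 = q.1.val ∨ q.1.val + 1 = p.1.val))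

/-- Clockwise distance from `b` to `a` on the cycle `Fin n`. -/
def relpos {n : ℕ} (a b : Fin n) : ℕ := (a.val + n - b.val) % n

/-- Lexicographic comparison on pairs of naturals. -/
def lexLe (p q : ℕ × ℕ) : Prop := p.1 < q.1 ∨ (p.1 = q.1 ∧ p.2 ≤ q.2)

/-- A set of indices forming a (possibly empty) cyclic interval of `Fin m`. -/
def CycInterval {m : ℕ} (S : Set (Fin m)) : Prop := S = ∅ ∨ ∃ i j : Fin m, S = arcC i j

/-- Maximal elements of a family of sets under inclusion. -/
def maxElems {X : Type} (F : Set (Set X)) : Set (Set X) :=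
  {H ∈ F | ∀ H' ∈ F, H ⊆ H' → H = H'}

/-!
A non-maximal `H` meeting `K` is adjacent in `Q` to its maximal superset `σ H`, which meets `K`
as well. So every vertex of the part of `Q` meeting `K` is reachable, inside that part, from the
copy of the part of `Q'` meeting `K`, which is connected by hypothesis.
-/

namespace SimpleGraph

variable {V W : Type*} {G : SimpleGraph V} {G' : SimpleGraph W}

theorem Connected.of_hom_of_forall_reachable (hG : G.Connected) (f : G →g G')
    (h : ∀ w, ∃ v, G'.Reachable (f v) w) : G'.Connected := by
  have : Nonempty W := hG.nonempty.map f
  refine ⟨fun w₁ w₂ => ?_⟩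
  obtain ⟨v₁, h₁⟩ := h w₁
  obtain ⟨v₂, h₂⟩ := h w₂
  exact h₁.symm.trans (((hG v₁ v₂).map f).trans h₂)

end SimpleGraph

theorem maxElems_subset {X : Type} (F : Set (Set X)) : maxElems F ⊆ F := fun _ h => h.1

theorem stmt0_general {X : Type} (𝓗 𝓚 : Set (Set X))
    (Q' : SimpleGraph ↥(maxElems 𝓗)) (Q : SimpleGraph ↥𝓗)
    (σ : Set X → Set X)
    (hσ : ∀ H ∈ 𝓗, H ∉ maxElems 𝓗 → σ H ∈ maxElems 𝓗 ∧ H ⊆ σ H)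
    (hQ' : ∀ K ∈ 𝓚,
      ({M : ↥(maxElems 𝓗) | ((M : Set X) ∩ K).Nonempty}).Nonempty →
      (Q'.induce {M : ↥(maxElems 𝓗) | ((M : Set X) ∩ K).Nonempty}).Connected)
    (hQ : ∀ A B : ↥𝓗, Q.Adj A B ↔
      ((∃ hA : (A : Set X) ∈ maxElems 𝓗, ∃ hB : (B : Set X) ∈ maxElems 𝓗,
        Q'.Adj ⟨A, hA⟩ ⟨B, hB⟩) ∨
       ((A : Set X) ∉ maxElems 𝓗 ∧ (B : Set X) = σ (A : Set X)) ∨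
       ((B : Set X) ∉ maxElems 𝓗 ∧ (A : Set X) = σ (B : Set X)))) :
    ∀ K ∈ 𝓚, ({H : ↥𝓗 | ((H : Set X) ∩ K).Nonempty}).Nonempty →
      (Q.induce {H : ↥𝓗 | ((H : Set X) ∩ K).Nonempty}).Connected := by
  intro K hK hne
  set S' : Set ↥(maxElems 𝓗) := {M | ((M : Set X) ∩ K).Nonempty}
  set S : Set ↥𝓗 := {H | ((H : Set X) ∩ K).Nonempty}
  let ι : Q' →g Q := ⟨Set.inclusion (maxElems_subset 𝓗), fun h => (hQ _ _).2 (Or.inl ⟨_, _, h⟩)⟩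
  let ιK : Q'.induce S' →g Q.induce S := SimpleGraph.induceHom ι fun _ h => h
  have hreach : ∀ A, ∃ M, (Q.induce S).Reachable (ιK M) A := by
    rintro ⟨A, hA⟩
    by_cases hAmax : (A : Set X) ∈ maxElems 𝓗
    · exact ⟨⟨⟨A, hAmax⟩, hA⟩, .refl _⟩
    · obtain ⟨hσmax, hAσ⟩ := hσ A A.2 hAmax
      refine ⟨⟨⟨σ A, hσmax⟩, hA.mono (Set.inter_subset_inter_left K hAσ)⟩,
        SimpleGraph.Adj.reachable ?_⟩
      exact (hQ _ _).2 (Or.inr (Or.inr ⟨hAmax, rfl⟩))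
  obtain ⟨A₀, hA₀⟩ := hne
  obtain ⟨M₀, -⟩ := hreach ⟨A₀, hA₀⟩
  exact (hQ' K hK ⟨M₀, M₀.2⟩).of_hom_of_forall_reachable ιK hreach

theorem stmt0 {X : Type} [Finite X] (𝓗 𝓚 : Set (Set X))
    (Q' : SimpleGraph ↥(maxElems 𝓗)) (Q : SimpleGraph ↥𝓗)
    (σ : Set X → Set X)
    (hσ : ∀ H ∈ 𝓗, H ∉ maxElems 𝓗 → σ H ∈ maxElems 𝓗 ∧ H ⊆ σ H)
    (hQ' : ∀ K ∈ 𝓚,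
      ({M : ↥(maxElems 𝓗) | ((M : Set X) ∩ K).Nonempty}).Nonempty →
      (Q'.induce {M : ↥(maxElems 𝓗) | ((M : Set X) ∩ K).Nonempty}).Connected)
    (hQ : ∀ A B : ↥𝓗, Q.Adj A B ↔
      ((∃ hA : (A : Set X) ∈ maxElems 𝓗, ∃ hB : (B : Set X) ∈ maxElems 𝓗,
        Q'.Adj ⟨A, hA⟩ ⟨B, hB⟩) ∨
       ((A : Set X) ∉ maxElems 𝓗 ∧ (B : Set X) = σ (A : Set X)) ∨
       ((B : Set X) ∉ maxElems 𝓗 ∧ (A : Set X) = σ (B : Set X)))) :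
    ∀ K ∈ 𝓚, ({H : ↥𝓗 | ((H : Set X) ∩ K).Nonempty}).Nonempty →
      (Q.induce {H : ↥𝓗 | ((H : Set X) ∩ K).Nonempty}).Connected :=
  stmt0_general 𝓗 𝓚 Q' Q σ hσ hQ' hQ
end

section
/- Let G be a graph with a tree decomposition (T, 𝓑) in which every bag induces a complete subgraph of G, and suppose a 2-coloring c : V(G) → {r, b} is given. Call the decomposition easy for a family 𝓗 of connected subgraphs if for every H ∈ 𝓗 and every adhesion set A = B_x ∩ B_y (for an edge {x,y} of T), H ∩ A ≠ ∅ implies H contains a blue vertex of A. If (T, 𝓑) is easy for 𝓗 and has width t, then the graph Q on the blue vertices b(V), with edges all pairs of blue vertices lying in a common bag, is a support for the primal hypergraph: for each H ∈ 𝓗 with at least one blue vertex, the blue vertices of H induce a connected subgraph of Q, and tw(Q) ≤ t. -/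
open scoped ENNReal

/-!
The bags containing a fixed vertex form a subtree, so a connected `H` that has vertices on both
sides of a tree edge `x y` meets the adhesion set `bag x ∩ bag y`; easiness then supplies a blue
vertex of `H` there. Walking along the tree path between bags of two blue vertices of `H`, the
blue vertices picked in consecutive adhesion sets share a bag, hence are adjacent in `Q`.
Restricting every bag to the blue vertices gives a tree decomposition of `Q` of no larger width.
-/

open SimpleGraph

section

variable {V W ι : Type}

theorem mem_sideVerts {T : SimpleGraph ι} {bag : ι → Set V} {x y : ι} {v : V} :
    v ∈ sideVerts T bag x y ↔
      ∃ i, (T.deleteEdges {s(x, y)}).Reachable x i ∧ v ∈ bag i := by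
  simp [sideVerts]

theorem sideVerts_preimage (T : SimpleGraph ι) (bag : ι → Set V) (f : W → V) (x y : ι) :
    sideVerts T (fun i => f ⁻¹' bag i) x y = f ⁻¹' sideVerts T bag x y := by
  ext w
  simp [mem_sideVerts]

def MeetsAdhesions (T : SimpleGraph ι) (β : ι → Set W) (S : Set W) : Prop :=
  ∀ x y, T.Adj x y → (S ∩ sideVerts T β x y).Nonempty →
    (S ∩ sideVerts T β y x).Nonempty → (S ∩ (β x ∩ β y)).Nonempty

theorem MeetsAdhesions.preimage {T : SimpleGraph ι} {bag : ι → Set V} {H : Set V}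
    (hH : MeetsAdhesions T bag H) (f : W → V)
    (hf : ∀ x y, T.Adj x y → (H ∩ (bag x ∩ bag y)).Nonempty →
      (f ⁻¹' H ∩ (f ⁻¹' bag x ∩ f ⁻¹' bag y)).Nonempty) :
    MeetsAdhesions T (fun i => f ⁻¹' bag i) (f ⁻¹' H) := by
  rintro x y hxy ⟨u, huH, hux⟩ ⟨w, hwH, hwy⟩
  rw [sideVerts_preimage] at hux hwy
  exact hf x y hxy (hH x y hxy ⟨f u, huH, hux⟩ ⟨f w, hwH, hwy⟩)

namespace SimpleGraph

variable {T : SimpleGraph ι} {x y : ι}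

theorem IsTree.not_reachable_deleteEdges (hT : T.IsTree) (h : T.Adj x y) :
    ¬ (T.deleteEdges {s(x, y)}).Reachable x y :=
  isBridge_iff.mp (isAcyclic_iff_forall_adj_isBridge.mp hT.isAcyclic h)

theorem Preconnected.mem_of_not_reachable_deleteEdges {S : Set ι}
    (hS : (T.induce S).Preconnected) {a b : ι} (ha : a ∈ S) (hb : b ∈ S)
    (hab : ¬ (T.deleteEdges {s(x, y)}).Reachable a b) : x ∈ S ∧ y ∈ S := by
  obtain ⟨p⟩ := hS ⟨a, ha⟩ ⟨b, hb⟩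
  set q := p.map (Embedding.induce S).toHom
  have hxy : s(x, y) ∈ q.edges := by
    by_contra h
    exact hab (reachable_deleteEdges_iff_exists_walk.mpr ⟨q, h⟩)
  have hsupp : ∀ v ∈ q.support, v ∈ S := by
    simp only [q, Walk.support_map, List.mem_map]
    rintro _ ⟨v, -, rfl⟩
    exact v.2
  exact ⟨hsupp _ (q.fst_mem_support_of_mem_edges hxy),
    hsupp _ (q.snd_mem_support_of_mem_edges hxy)⟩

end SimpleGraph

namespace IsTreeDecomp

variable {G : SimpleGraph V} {T : SimpleGraph ι} {bag : ι → Set V}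

theorem mem_bag_inter_of_not_reachable (hTD : IsTreeDecomp G T bag) {x y a b : ι} {v : V}
    (ha : v ∈ bag a) (hb : v ∈ bag b) (hab : ¬ (T.deleteEdges {s(x, y)}).Reachable a b) :
    v ∈ bag x ∩ bag y :=
  (hTD.2.2.2 v).preconnected.mem_of_not_reachable_deleteEdges ha hb hab

theorem inter_bag_inter_nonempty_of_walk (hTD : IsTreeDecomp G T bag) {H : Set V} {x y : ι}
    {u w : H} (p : (G.induce H).Walk u w) {a b : ι}
    (ha : (T.deleteEdges {s(x, y)}).Reachable x a) (hu : (u : V) ∈ bag a)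
    (hb : ¬ (T.deleteEdges {s(x, y)}).Reachable x b) (hw : (w : V) ∈ bag b) :
    (H ∩ (bag x ∩ bag y)).Nonempty := by
  induction p generalizing a with
  | nil =>
    exact ⟨_, Subtype.prop _,
      hTD.mem_bag_inter_of_not_reachable hu hw fun hab => hb (ha.trans hab)⟩
  | @cons u v _ huv _ ih =>
    obtain ⟨m, hum, hvm⟩ := hTD.2.2.1 u v huv
    by_cases hm : (T.deleteEdges {s(x, y)}).Reachable x m
    · exact ih hm hvm hw
    · exact ⟨u, u.2, hTD.mem_bag_inter_of_not_reachable hu hum fun ham => hm (ha.trans ham)⟩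

theorem meetsAdhesions (hTD : IsTreeDecomp G T bag) {H : Set V}
    (hH : (G.induce H).Preconnected) : MeetsAdhesions T bag H := by
  rintro x y hxy ⟨u, huH, hux⟩ ⟨w, hwH, hwy⟩
  obtain ⟨a, ha, hua⟩ := mem_sideVerts.mp hux
  obtain ⟨b, hb, hwb⟩ := mem_sideVerts.mp hwy
  rw [Sym2.eq_swap] at hb
  obtain ⟨p⟩ := hH ⟨u, huH⟩ ⟨w, hwH⟩
  refine hTD.inter_bag_inter_nonempty_of_walk p ha hua (fun hxb => ?_) hwb
  exact hTD.1.not_reachable_deleteEdges hxy (hxb.trans hb.symm)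

theorem preimage (hTD : IsTreeDecomp G T bag) {Q : SimpleGraph W} (f : W → V)
    (hQ : ∀ u w, Q.Adj u w → ∃ i, f u ∈ bag i ∧ f w ∈ bag i) :
    IsTreeDecomp Q T (fun i => f ⁻¹' bag i) :=
  ⟨hTD.1, fun w => hTD.2.1 (f w), hQ, fun w => hTD.2.2.2 (f w)⟩

end IsTreeDecomp

theorem treewidth_le_decompWidth {G : SimpleGraph V} {T : SimpleGraph ι} {bag : ι → Set V}
    (hTD : IsTreeDecomp G T bag) : treewidth G ≤ decompWidth bag :=
  sInf_le ⟨ι, T, bag, hTD, rfl⟩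

theorem decompWidth_preimage_le (bag : ι → Set V) {f : W → V} (hf : f.Injective) :
    decompWidth (fun i => f ⁻¹' bag i) ≤ decompWidth bag :=
  tsub_le_tsub_right (iSup_mono fun _ =>
    Set.encard_le_encard_of_injOn (Set.mapsTo_preimage f _) hf.injOn) 1

theorem preconnected_induce_of_meetsAdhesions {Q : SimpleGraph W} {T : SimpleGraph ι}
    {β : ι → Set W} (hT : T.Preconnected) (hclique : ∀ i, (β i).Pairwise Q.Adj) {S : Set W}
    (hcover : ∀ w ∈ S, ∃ i, w ∈ β i) (hS : MeetsAdhesions T β S) :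
    (Q.induce S).Preconnected := by
  classical
  have reachable_of_mem_bag : ∀ i (u w : S), (u : W) ∈ β i → (w : W) ∈ β i →
      (Q.induce S).Reachable u w := by
    intro i u w hu hw
    by_cases huw : u = w
    · exact huw ▸ Reachable.refl _
    · exact Adj.reachable (G := Q.induce S) (hclique i hu hw (Subtype.coe_ne_coe.mpr huw))
  have reachable_along_path : ∀ {i j} (p : T.Walk i j), p.IsPath → ∀ u w : S,
      (u : W) ∈ β i → (w : W) ∈ β j → (Q.induce S).Reachable u w := by
    intro i j p
    induction p with
    | nil => exact fun _ u w => reachable_of_mem_bag _ u w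
    | @cons i k j hik q ih =>
      intro hp u w hu hw
      obtain ⟨hq, hiq⟩ := (Walk.cons_isPath_iff hik q).mp hp
      have hkj : (T.deleteEdges {s(k, i)}).Reachable k j :=
        reachable_deleteEdges_iff_exists_walk.mpr
          ⟨q, fun he => hiq (q.snd_mem_support_of_mem_edges he)⟩
      obtain ⟨v, hvS, hvk, hvi⟩ := hS k i hik.symm ⟨w, w.2, mem_sideVerts.mpr ⟨j, hkj, hw⟩⟩
        ⟨u, u.2, mem_sideVerts.mpr ⟨i, .refl _, hu⟩⟩
      exact (reachable_of_mem_bag i u ⟨v, hvS⟩ hu hvi).trans (ih hq ⟨v, hvS⟩ w hvk hw)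
  intro u w
  obtain ⟨i, hu⟩ := hcover u u.2
  obtain ⟨j, hw⟩ := hcover w w.2
  obtain ⟨p⟩ := hT i j
  exact reachable_along_path p.toPath.1 p.toPath.2 u w hu hw

end

theorem stmt3_general {V ι : Type} (G : SimpleGraph V) (T : SimpleGraph ι) (bag : ι → Set V)
    (hTD : IsTreeDecomp G T bag)
    (c : V → Bool) (𝓗 : Set (Set V))
    (hconn : ∀ H ∈ 𝓗, (G.induce H).Connected)
    (heasy : ∀ H ∈ 𝓗, ∀ x y : ι, T.Adj x y → (H ∩ (bag x ∩ bag y)).Nonempty →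
      ∃ v ∈ H ∩ (bag x ∩ bag y), c v = true)
    (t : ℕ∞) (hw : decompWidth bag ≤ t)
    (Q : SimpleGraph {v : V // c v = true})
    (hQ : ∀ u w : {v : V // c v = true}, Q.Adj u w ↔
      u ≠ w ∧ ∃ i, (u : V) ∈ bag i ∧ (w : V) ∈ bag i) :
    (∀ H ∈ 𝓗, (H ∩ {v | c v = true}).Nonempty →
      (Q.induce {v : {v : V // c v = true} | (v : V) ∈ H}).Connected) ∧
    treewidth Q ≤ t := by
  have hTDQ : IsTreeDecomp Q T (fun i => Subtype.val ⁻¹' bag i) :=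
    hTD.preimage Subtype.val fun u w huw => ((hQ u w).mp huw).2
  refine ⟨fun H hH ⟨v, hvH, hv⟩ => (connected_iff _).mpr ⟨?_, ⟨⟨⟨v, hv⟩, hvH⟩⟩⟩, ?_⟩
  · have hmeets : MeetsAdhesions T (fun i => Subtype.val ⁻¹' bag i) (Subtype.val ⁻¹' H) :=
      (hTD.meetsAdhesions (hconn H hH).preconnected).preimage Subtype.val
        fun x y hxy hne => by
          obtain ⟨v, hv, hvc⟩ := heasy H hH x y hxy hne
          exact ⟨⟨v, hvc⟩, hv⟩
    exact preconnected_induce_of_meetsAdhesions hTD.1.preconnected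
      (fun i u hu w hw huw => (hQ u w).mpr ⟨huw, i, hu, hw⟩) (fun w _ => hTDQ.2.1 w) hmeets
  · calc treewidth Q ≤ decompWidth (fun i => Subtype.val ⁻¹' bag i) :=
          treewidth_le_decompWidth hTDQ
      _ ≤ decompWidth bag := decompWidth_preimage_le bag Subtype.val_injective
      _ ≤ t := hw

theorem stmt3 {V ι : Type} (G : SimpleGraph V) (T : SimpleGraph ι) (bag : ι → Set V)
    (hTD : IsTreeDecomp G T bag)
    (hclique : ∀ i, (bag i).Pairwise G.Adj)
    (c : V → Bool) (𝓗 : Set (Set V))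
    (hconn : ∀ H ∈ 𝓗, (G.induce H).Connected)
    (heasy : ∀ H ∈ 𝓗, ∀ x y : ι, T.Adj x y → (H ∩ (bag x ∩ bag y)).Nonempty →
      ∃ v ∈ H ∩ (bag x ∩ bag y), c v = true)
    (t : ℕ∞) (hw : decompWidth bag ≤ t)
    (Q : SimpleGraph {v : V // c v = true})
    (hQ : ∀ u w : {v : V // c v = true}, Q.Adj u w ↔
      u ≠ w ∧ ∃ i, (u : V) ∈ bag i ∧ (w : V) ∈ bag i) :
    (∀ H ∈ 𝓗, (H ∩ {v | c v = true}).Nonempty →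
      (Q.induce {v : {v : V // c v = true} | (v : V) ∈ H}).Connected) ∧
    treewidth Q ≤ t :=
  stmt3_general G T bag hTD c 𝓗 hconn heasy t hw Q hQ
end

section
/- Let G be a graph with tree decomposition (T, 𝓑) of width t, where each bag induces a clique in G, and let 𝓗 be a family of connected subgraphs of G such that every bag intersects at most k of the subgraphs in 𝓗. Define a graph Q* on 𝓗 by joining H and H' whenever some bag intersects both. Then tw(Q*) ≤ k, and Q* is a dual support: for each vertex v of G, the set {H ∈ 𝓗 : v ∈ V(H)} induces a connected (indeed complete) subgraph of Q*. -/
open scoped ENNReal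

lemma reach_mono' {α : Type*} (G : SimpleGraph α) {s t : Set α} (hst : s ⊆ t) {a b : ↥s}
    (h : (G.induce s).Reachable a b) :
    (G.induce t).Reachable ⟨a, hst a.2⟩ ⟨b, hst b.2⟩ :=
  h.map (G.induceHomOfLE hst).toHom

lemma bag_conn {V ι : Type} (G : SimpleGraph V) (T : SimpleGraph ι) (bag : ι → Set V)
    (hconn' : ∀ v, (T.induce {i | v ∈ bag i}).Connected)
    (hcover : ∀ v, ∃ i, v ∈ bag i)
    (hedge : ∀ u v, G.Adj u v → ∃ i, u ∈ bag i ∧ v ∈ bag i)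
    (H : Set V) (hHc : (G.induce H).Connected) :
    (T.induce {i | (H ∩ bag i).Nonempty}).Connected := by
  set S : Set ι := {i | (H ∩ bag i).Nonempty} with hS
  have lemA : ∀ (u : V) (huH : u ∈ H) (i j : ι) (hui : u ∈ bag i) (huj : u ∈ bag j),
      (T.induce S).Reachable ⟨i, ⟨u, huH, hui⟩⟩ ⟨j, ⟨u, huH, huj⟩⟩ := by
    intro u huH i j hui huj
    have hsub : {i | u ∈ bag i} ⊆ S := fun m hm => ⟨u, huH, hm⟩
    exact reach_mono' T hsub ((hconn' u).preconnected ⟨i, hui⟩ ⟨j, huj⟩)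
  have key : ∀ {u w : ↥H} (p : (G.induce H).Walk u w) (i j : ι)
      (hui : (u : V) ∈ bag i) (hwj : (w : V) ∈ bag j),
      (T.induce S).Reachable ⟨i, ⟨u, u.2, hui⟩⟩ ⟨j, ⟨w, w.2, hwj⟩⟩ := by
    intro u w p
    induction p with
    | nil => intro i j hui hwj; exact lemA _ (Subtype.prop _) i j hui hwj
    | cons h p ih =>
        intro i j hui hwj
        obtain ⟨m, hum, hxm⟩ := hedge _ _ h
        exact (lemA _ (Subtype.prop _) i m hui hum).trans (ih m j hxm hwj)
  rw [SimpleGraph.connected_iff]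
  constructor
  · intro ⟨i, hi⟩ ⟨j, hj⟩
    obtain ⟨u, huH, hui⟩ := hi
    obtain ⟨w, hwH, hwj⟩ := hj
    obtain ⟨p⟩ := hHc.preconnected ⟨u, huH⟩ ⟨w, hwH⟩
    exact key p i j hui hwj
  · obtain ⟨⟨u, huH⟩⟩ := hHc.nonempty
    obtain ⟨i, hi⟩ := hcover u
    exact ⟨⟨i, u, huH, hi⟩⟩

theorem stmt4 {V ι : Type} (G : SimpleGraph V) (T : SimpleGraph ι) (bag : ι → Set V)
    (hTD : IsTreeDecomp G T bag)
    (hclique : ∀ i, (bag i).Pairwise G.Adj)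
    (𝓗 : Set (Set V))
    (hconn : ∀ H ∈ 𝓗, (G.induce H).Connected)
    (k : ℕ∞)
    (hsparse : ∀ i, {H : ↥𝓗 | ((H : Set V) ∩ bag i).Nonempty}.encard ≤ k)
    (Q : SimpleGraph ↥𝓗)
    (hQ : ∀ H H' : ↥𝓗, Q.Adj H H' ↔ H ≠ H' ∧
      ∃ i, ((H : Set V) ∩ bag i).Nonempty ∧ ((H' : Set V) ∩ bag i).Nonempty) :
    treewidth Q ≤ k ∧
    ∀ v : V,
      (∀ H H' : ↥𝓗, v ∈ (H : Set V) → v ∈ (H' : Set V) → H ≠ H' → Q.Adj H H') ∧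
      ({H : ↥𝓗 | v ∈ (H : Set V)}.Nonempty →
        (Q.induce {H : ↥𝓗 | v ∈ (H : Set V)}).Connected) := by
  obtain ⟨hT, hcover, hedge, hconn'⟩ := hTD
  have hadj : ∀ v : V, ∀ H H' : ↥𝓗, v ∈ (H : Set V) → v ∈ (H' : Set V) → H ≠ H' →
      Q.Adj H H' := by
    intro v H H' hv hv' hne
    obtain ⟨i, hi⟩ := hcover v
    exact (hQ H H').2 ⟨hne, i, ⟨v, hv, hi⟩, ⟨v, hv', hi⟩⟩
  constructor
  · set bag' : ι → Set ↥𝓗 := fun i => {H : ↥𝓗 | ((H : Set V) ∩ bag i).Nonempty} with hbag'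
    have hTD' : IsTreeDecomp Q T bag' := by
      refine ⟨hT, ?_, ?_, ?_⟩
      · intro H
        obtain ⟨⟨v, hv⟩⟩ := (hconn H H.2).nonempty
        obtain ⟨i, hi⟩ := hcover v
        exact ⟨i, v, hv, hi⟩
      · intro H H' hA
        exact ((hQ H H').1 hA).2
      · intro H
        exact bag_conn G T bag hconn' hcover hedge (H : Set V) (hconn H H.2)
    have h1 : treewidth Q ≤ decompWidth bag' :=
      sInf_le ⟨ι, T, bag', hTD', rfl⟩
    refine h1.trans ?_
    calc decompWidth bag' ≤ ⨆ i, (bag' i).encard := tsub_le_self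
      _ ≤ k := iSup_le fun i => hsparse i
  · intro v
    refine ⟨hadj v, ?_⟩
    rintro ⟨H₀, hH₀⟩
    rw [SimpleGraph.connected_iff]
    refine ⟨?_, ⟨H₀, hH₀⟩⟩
    intro a b
    rcases eq_or_ne a b with rfl | hne
    · exact SimpleGraph.Reachable.refl a
    · have hne' : (a : ↥𝓗) ≠ (b : ↥𝓗) := fun h => hne (Subtype.ext h)
      exact SimpleGraph.Adj.reachable (hadj v a b a.2 b.2 hne')
end

section
/- Let G be a graph, (T, 𝓑) a tree decomposition of G, {x,y} an edge of T with adhesion set A = B_x ∩ B_y, and let G_x be the union of the bags in the component of T − {x,y} containing x. Let 𝓗 be a family of connected subgraphs of G such that for all H, H' ∈ 𝓗, V(H) \ V(H') induces a connected subgraph of G (non-piercing). If H, H' ∈ 𝓗 satisfy V(H) ∩ A = V(H') ∩ A ≠ ∅ and the restrictions H|_x = V(H) ∩ V(G_x) and H'|_x = V(H') ∩ V(G_x) properly intersect (each has a vertex the other lacks), then V(H) \ V(G_x) = V(H') \ V(G_x). -/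
open scoped ENNReal

private lemma cross_walk {α : Type} {Q : SimpleGraph α} (P : α → Prop) :
    ∀ {a b : α} (_ : Q.Walk a b), P a → ¬ P b →
      ∃ u v, Q.Adj u v ∧ P u ∧ ¬ P v := by
  intro a b W
  induction W with
  | nil => intro h h'; exact absurd h h'
  | @cons a c b h p ih =>
    intro ha hb
    by_cases hc : P c
    · exact ih hc hb
    · exact ⟨a, c, h, ha, hc⟩

private lemma sep_lemma {V ι : Type} (G : SimpleGraph V) (T : SimpleGraph ι) (bag : ι → Set V)
    (hTD : IsTreeDecomp G T bag) (x y : ι) {u v : V} (huv : G.Adj u v)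
    (hu : u ∈ sideVerts T bag x y) (hv : v ∉ sideVerts T bag x y) :
    u ∈ bag x ∩ bag y := by
  obtain ⟨_, _, hedge, hsub⟩ := hTD
  obtain ⟨i, hui, hvi⟩ := hedge u v huv
  have hiR : ¬ (T.deleteEdges {s(x,y)}).Reachable x i := by
    intro h
    exact hv (Set.mem_biUnion h hvi)
  obtain ⟨j, hjR, huj⟩ : ∃ j, (T.deleteEdges {s(x,y)}).Reachable x j ∧ u ∈ bag j := by
    simpa [sideVerts, Set.mem_iUnion] using hu
  obtain ⟨W⟩ := (hsub u).preconnected ⟨j, huj⟩ ⟨i, hui⟩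
  obtain ⟨⟨a, hua⟩, ⟨b, hub⟩, hab, haR, hbR⟩ :=
    cross_walk (fun k : {k | u ∈ bag k} => (T.deleteEdges {s(x,y)}).Reachable x (k:ι)) W hjR hiR
  have hTab : T.Adj a b := hab
  by_cases he : s(a, b) = s(x, y)
  · rcases Sym2.eq_iff.mp he with ⟨rfl, rfl⟩ | ⟨rfl, rfl⟩
    · exact ⟨hua, hub⟩
    · exact absurd (SimpleGraph.Reachable.refl _) hbR
  · have hadj : (T.deleteEdges {s(x,y)}).Adj a b := by
      rw [SimpleGraph.deleteEdges_adj]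
      exact ⟨hTab, by simpa using he⟩
    exact absurd (haR.trans hadj.reachable) hbR

private lemma half_lemma {V ι : Type} (G : SimpleGraph V) (T : SimpleGraph ι) (bag : ι → Set V)
    (hTD : IsTreeDecomp G T bag) (x y : ι) (H H' : Set V)
    (hnpd : (H \ H').Nonempty → (G.induce (H \ H')).Connected)
    (hA : H ∩ (bag x ∩ bag y) = H' ∩ (bag x ∩ bag y))
    (hpi : ((H ∩ sideVerts T bag x y) \ (H' ∩ sideVerts T bag x y)).Nonempty) :
    H \ sideVerts T bag x y ⊆ H' := by
  obtain ⟨w, ⟨hwH, hws⟩, hw'⟩ := hpi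
  have hwH' : w ∉ H' := fun h => hw' ⟨h, hws⟩
  rintro v ⟨hvH, hvs⟩
  by_contra hvH'
  have hD : (H \ H').Nonempty := ⟨w, hwH, hwH'⟩
  obtain ⟨W⟩ := (hnpd hD).preconnected ⟨w, ⟨hwH, hwH'⟩⟩ ⟨v, ⟨hvH, hvH'⟩⟩
  obtain ⟨⟨a, haD⟩, ⟨b, hbD⟩, hab, haS, hbS⟩ :=
    cross_walk (fun z : ↥(H \ H') => (z : V) ∈ sideVerts T bag x y) W hws hvs
  have haA : a ∈ bag x ∩ bag y := sep_lemma G T bag hTD x y hab haS hbS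
  have : a ∈ H' ∩ (bag x ∩ bag y) := hA ▸ ⟨haD.1, haA⟩
  exact haD.2 this.1

theorem stmt5 {V ι : Type} (G : SimpleGraph V) (T : SimpleGraph ι) (bag : ι → Set V)
    (hTD : IsTreeDecomp G T bag) (x y : ι) (hxy : T.Adj x y)
    (𝓗 : Set (Set V))
    (hconn : ∀ H ∈ 𝓗, (G.induce H).Connected)
    (hnp : NonPiercing G 𝓗)
    (H H' : Set V) (hH : H ∈ 𝓗) (hH' : H' ∈ 𝓗)
    (hA : H ∩ (bag x ∩ bag y) = H' ∩ (bag x ∩ bag y))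
    (hAne : (H ∩ (bag x ∩ bag y)).Nonempty)
    (hpi1 : ((H ∩ sideVerts T bag x y) \ (H' ∩ sideVerts T bag x y)).Nonempty)
    (hpi2 : ((H' ∩ sideVerts T bag x y) \ (H ∩ sideVerts T bag x y)).Nonempty) :
    H \ sideVerts T bag x y = H' \ sideVerts T bag x y := by
  have h1 : H \ sideVerts T bag x y ⊆ H' :=
    half_lemma G T bag hTD x y H H' (hnp H hH H' hH') hA hpi1
  have h2 : H' \ sideVerts T bag x y ⊆ H :=
    half_lemma G T bag hTD x y H' H (hnp H' hH' H hH) hA.symm hpi2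
  ext v
  constructor
  · rintro ⟨hv, hvs⟩; exact ⟨h1 ⟨hv, hvs⟩, hvs⟩
  · rintro ⟨hv, hvs⟩; exact ⟨h2 ⟨hv, hvs⟩, hvs⟩
end

section
/- Let G be a chordal graph (every bag of a given tree decomposition induces a clique), x a node of a tree decomposition (T, 𝓑) with parent y, and G_x the union of bags in the subtree rooted at x. If 𝓗 is a non-piercing family of connected subgraphs of G, then the family {G[V(H) ∩ V(G_x)] : H ∈ 𝓗, V(H) ∩ V(G_x) ≠ ∅} is a non-piercing family of connected subgraphs of G_x. -/
open scoped ENNReal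

/-!
Let `A` be the `x`-side of the decomposition. If an edge `uv` of `G` has `u ∈ A` and `v ∉ A`, it
lies in a bag outside the `x`-side while `u` lies in a bag on it, so the subtree of bags containing
`u` crosses the edge `xy`: every edge leaving `A` starts in the clique `bag x ∩ bag y`. Hence a
walk inside a connected set `W` that leaves `A` re-enters it through that clique, and the excursion
can be short-cut by a single clique edge, so `W ∩ A` stays connected. Apply this to `W = H` and to
`W = H \ H'`.
-/

namespace SimpleGraph

variable {V : Type} {G : SimpleGraph V} {A S W : Set V}

/-- `z` stands for the current vertex `a` or, while the walk is outside `A`, for any vertex of the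
clique `S` in `W ∩ A`. -/
theorem reachable_induce_inter_of_walk (hS : S.Pairwise G.Adj)
    (hbd : ∀ u v, G.Adj u v → u ∈ A → v ∉ A → u ∈ S) {a b : V} (p : G.Walk a b)
    (hpW : ∀ v ∈ p.support, v ∈ W) (hb : b ∈ W ∩ A) {z : V} (hz : z ∈ W ∩ A)
    (hza : z = a ∨ z ∈ S ∧ a ∉ A) :
    (G.induce (W ∩ A)).Reachable ⟨z, hz⟩ ⟨b, hb⟩ := by
  induction p generalizing z with
  | nil =>
    rcases hza with rfl | ⟨-, ha⟩
    · rfl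
    · exact absurd hb.2 ha
  | @cons a c b hac q ih =>
    have hqW : ∀ v ∈ q.support, v ∈ W := fun v hv => hpW v (by simp [hv])
    by_cases hc : c ∈ A
    · have hcW : c ∈ W ∩ A := ⟨hpW c (by simp), hc⟩
      have hzc : (G.induce (W ∩ A)).Reachable ⟨z, hz⟩ ⟨c, hcW⟩ := by
        rcases hza with rfl | ⟨hzS, ha⟩
        · exact Adj.reachable (induce_adj.2 hac)
        · have hcS : c ∈ S := hbd c a hac.symm hc ha
          by_cases hzc : z = c
          · subst hzc; rfl
          · exact Adj.reachable (induce_adj.2 (hS hzS hcS hzc))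
      exact hzc.trans (ih hqW hb hcW (Or.inl rfl))
    · have hzS : z ∈ S := by
        rcases hza with rfl | ⟨hzS, -⟩
        · exact hbd z c hac hz.2 hc
        · exact hzS
      exact ih hqW hb hz (Or.inr ⟨hzS, hc⟩)

theorem Connected.induce_inter_of_isClique_boundary (hW : (G.induce W).Connected)
    (hS : S.Pairwise G.Adj) (hbd : ∀ u v, G.Adj u v → u ∈ A → v ∉ A → u ∈ S)
    (hne : (W ∩ A).Nonempty) : (G.induce (W ∩ A)).Connected := by
  rw [connected_iff]
  refine ⟨fun ⟨a, ha⟩ ⟨b, hb⟩ => ?_, hne.to_subtype⟩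
  obtain ⟨p⟩ := hW.preconnected ⟨a, ha.1⟩ ⟨b, hb.1⟩
  refine reachable_induce_inter_of_walk hS hbd (p.map (Embedding.induce W).toHom) ?_ hb ha
    (Or.inl rfl)
  intro v hv
  rw [Walk.support_map, List.mem_map] at hv
  obtain ⟨⟨v, hvW⟩, -, rfl⟩ := hv
  exact hvW

theorem eq_of_adj_of_reachable_deleteEdges {ι : Type} {T : SimpleGraph ι} {x y a b : ι}
    (hab : T.Adj a b) (ha : (T.deleteEdges {s(x, y)}).Reachable x a)
    (hb : ¬ (T.deleteEdges {s(x, y)}).Reachable x b) : a = x ∧ b = y := by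
  have hxy : s(a, b) = s(x, y) := by
    by_contra hne
    exact hb (ha.trans (deleteEdges_adj.2 ⟨hab, hne⟩).reachable)
  rcases Sym2.eq_iff.1 hxy with hxy | ⟨-, rfl⟩
  · exact hxy
  · exact absurd Reachable.rfl hb

end SimpleGraph

open SimpleGraph

theorem mem_bag_inter_of_adj_of_mem_sideVerts {V ι : Type} {G : SimpleGraph V}
    {T : SimpleGraph ι} {bag : ι → Set V} (hTD : IsTreeDecomp G T bag) {x y : ι} {u v : V}
    (huv : G.Adj u v) (hu : u ∈ sideVerts T bag x y) (hv : v ∉ sideVerts T bag x y) :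
    u ∈ bag x ∩ bag y := by
  simp only [sideVerts, Set.mem_iUnion, Set.mem_ofPred_eq, exists_prop, not_exists,
    not_and] at hu hv
  obtain ⟨j, hj, hju⟩ := hu
  obtain ⟨i, hui, hvi⟩ := hTD.2.2.1 u v huv
  obtain ⟨p⟩ := (hTD.2.2.2 u).preconnected ⟨j, hju⟩ ⟨i, hui⟩
  obtain ⟨d, -, hd₁, hd₂⟩ := p.exists_boundary_dart
    {k | (T.deleteEdges {s(x, y)}).Reachable x k} hj (fun hi => hv i hi hvi)
  obtain ⟨hx, hy⟩ := eq_of_adj_of_reachable_deleteEdges (induce_adj.1 d.adj) hd₁ hd₂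
  exact ⟨hx ▸ d.fst.2, hy ▸ d.snd.2⟩

theorem stmt7_general {V ι : Type} (G : SimpleGraph V) (T : SimpleGraph ι) (bag : ι → Set V)
    (hTD : IsTreeDecomp G T bag)
    (hclique : ∀ i, (bag i).Pairwise G.Adj)
    (x y : ι)
    (𝓗 : Set (Set V))
    (hconn : ∀ H ∈ 𝓗, (G.induce H).Connected)
    (hnp : NonPiercing G 𝓗) :
    (∀ H ∈ 𝓗, (H ∩ sideVerts T bag x y).Nonempty →
      (G.induce (H ∩ sideVerts T bag x y)).Connected) ∧
    (∀ H ∈ 𝓗, ∀ H' ∈ 𝓗,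
      ((H ∩ sideVerts T bag x y) \ (H' ∩ sideVerts T bag x y)).Nonempty →
      (G.induce ((H ∩ sideVerts T bag x y) \ (H' ∩ sideVerts T bag x y))).Connected) := by
  have hS : (bag x ∩ bag y).Pairwise G.Adj := (hclique x).mono Set.inter_subset_left
  have hbd : ∀ u v, G.Adj u v → u ∈ sideVerts T bag x y → v ∉ sideVerts T bag x y →
      u ∈ bag x ∩ bag y := fun _ _ => mem_bag_inter_of_adj_of_mem_sideVerts hTD
  refine ⟨fun H hH hne => (hconn H hH).induce_inter_of_isClique_boundary hS hbd hne,
    fun H hH H' hH' hne => ?_⟩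
  rw [← Set.inter_sdiff_distrib_right] at hne ⊢
  exact (hnp H hH H' hH' (hne.mono Set.inter_subset_left)).induce_inter_of_isClique_boundary
    hS hbd hne

theorem stmt7 {V ι : Type} (G : SimpleGraph V) (T : SimpleGraph ι) (bag : ι → Set V)
    (hTD : IsTreeDecomp G T bag)
    (hclique : ∀ i, (bag i).Pairwise G.Adj)
    (x y : ι) (hxy : T.Adj x y)
    (𝓗 : Set (Set V))
    (hconn : ∀ H ∈ 𝓗, (G.induce H).Connected)
    (hnp : NonPiercing G 𝓗) :
    (∀ H ∈ 𝓗, (H ∩ sideVerts T bag x y).Nonempty →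
      (G.induce (H ∩ sideVerts T bag x y)).Connected) ∧
    (∀ H ∈ 𝓗, ∀ H' ∈ 𝓗,
      ((H ∩ sideVerts T bag x y) \ (H' ∩ sideVerts T bag x y)).Nonempty →
      (G.induce ((H ∩ sideVerts T bag x y) \ (H' ∩ sideVerts T bag x y))).Connected) :=
  stmt7_general G T bag hTD hclique x y 𝓗 hconn hnp
end

section
/- Let G be an outerplanar graph embedded with all vertices on the outer cycle C, and let 𝓗 be a family of connected subgraphs of G that is non-piercing (all pairwise differences of vertex sets induce connected subgraphs of G). Then the cycle system (C, 𝓗) is axax-free: there do not exist H, H' ∈ 𝓗 and four distinct vertices a₁, x₁, a₂, x₂ appearing in this cyclic order on C with a₁, a₂ ∈ V(H) \ V(H') and x₁, x₂ ∈ V(H'). -/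
open scoped ENNReal

/-!
Measure positions on the cycle clockwise from a fixed vertex `d` (`relpos · d`). If `H \ H'`
contains `a₁, a₂` and misses `x₁, x₂`, a walk in `H \ H'` from `a₁` to `a₂` must step over the
position of `x₁`, so it contains an edge `uv` with `u, x₁, v, x₂` in cyclic order. The same
argument applied to a walk in `H'` from `x₂` to `x₁`, which misses `u` and `v`, yields an edge of
`G` crossing `uv`, contradicting the outerplanar layout.
-/

lemma relpos_eq_ite {n : ℕ} (a d : Fin n) :
    relpos a d = if d.val ≤ a.val then a.val - d.val else a.val + n - d.val := by
  unfold relpos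
  split
  · rw [show a.val + n - d.val = (a.val - d.val) + n by omega, Nat.add_mod_right]
    exact Nat.mod_eq_of_lt (by omega)
  · exact Nat.mod_eq_of_lt (by omega)

lemma relpos_left_injective {n : ℕ} (d : Fin n) : Function.Injective (relpos · d) := by
  intro a b h
  have := a.isLt; have := b.isLt
  simp only [relpos_eq_ite] at h
  ext
  split_ifs at h <;> omega

lemma relpos_pos_of_ne {n : ℕ} {a d : Fin n} (h : a ≠ d) : 0 < relpos a d := by
  have : a.val ≠ d.val := Fin.val_ne_of_ne h
  rw [relpos_eq_ite]
  split_ifs <;> omega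

lemma cyc4_iff_relpos {n : ℕ} (a b c d : Fin n) :
    Cyc4 a b c d ↔ 0 < relpos a d ∧ relpos a d < relpos b d ∧ relpos b d < relpos c d := by
  have := a.isLt; have := b.isLt; have := c.isLt; have := d.isLt
  simp only [Cyc4, Fin.lt_def, relpos_eq_ite]
  split_ifs <;> omega

lemma Cyc4.rotate {n : ℕ} {a b c d : Fin n} (h : Cyc4 a b c d) : Cyc4 d a b c := by
  unfold Cyc4 at *
  tauto

lemma exists_adj_cyc4_of_preconnected {n : ℕ} {G : SimpleGraph (Fin n)} {S : Set (Fin n)}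
    (hS : (G.induce S).Preconnected) {a b c d : Fin n} (habcd : Cyc4 a b c d)
    (ha : a ∈ S) (hc : c ∈ S) (hb : b ∉ S) (hd : d ∉ S) :
    ∃ u ∈ S, ∃ v ∈ S, G.Adj u v ∧ Cyc4 u b v d := by
  obtain ⟨-, hab, hbc⟩ := (cyc4_iff_relpos a b c d).mp habcd
  obtain ⟨p⟩ := hS ⟨a, ha⟩ ⟨c, hc⟩
  -- the walk must leave the positions clockwise before `b`, and it never visits `b` itself
  obtain ⟨⟨⟨u, v⟩, huv⟩, -, hub, hvb⟩ :=
    p.exists_boundary_dart {w | relpos w.1 d < relpos b d} hab hbc.not_gt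
  have hvb' : relpos v.1 d ≠ relpos b d := fun h =>
    hb (relpos_left_injective d h ▸ v.2)
  refine ⟨u, u.2, v, v.2, huv, (cyc4_iff_relpos _ _ _ _).mpr
    ⟨relpos_pos_of_ne fun h => hd (h ▸ u.2), hub, ?_⟩⟩
  exact lt_of_le_of_ne (not_lt.mp hvb) hvb'.symm

theorem stmt10_general (n : ℕ) (G : SimpleGraph (Fin n))
    (hnoncross : ∀ a b c d : Fin n, G.Adj a b → G.Adj c d → ¬ Cyc4 a c b d)
    (𝓗 : Set (Set (Fin n)))
    (hconn : ∀ H ∈ 𝓗, (G.induce H).Connected)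
    (hnp : NonPiercing G 𝓗) :
    AxaxFree 𝓗 := by
  rintro ⟨H, hH, H', hH', a₁, x₁, a₂, x₂, hcyc, ha₁, ha₂, hx₁, hx₂⟩
  obtain ⟨u, hu, v, hv, huv, huxvx⟩ :=
    exists_adj_cyc4_of_preconnected (hnp H hH H' hH' ⟨a₁, ha₁⟩).preconnected hcyc ha₁ ha₂
      (fun h => h.2 hx₁) (fun h => h.2 hx₂)
  obtain ⟨p, -, q, -, hpq, hpuqv⟩ :=
    exists_adj_cyc4_of_preconnected (hconn H' hH').preconnected huxvx.rotate hx₂ hx₁ hu.2 hv.2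
  exact hnoncross p q u v hpq huv hpuqv

theorem stmt10 (n : ℕ) [NeZero n] (hn : 3 ≤ n) (G : SimpleGraph (Fin n))
    (hcycle : ∀ i : Fin n, G.Adj i (i + 1))
    (hnoncross : ∀ a b c d : Fin n, G.Adj a b → G.Adj c d → ¬ Cyc4 a c b d)
    (𝓗 : Set (Set (Fin n)))
    (hconn : ∀ H ∈ 𝓗, (G.induce H).Connected)
    (hnp : NonPiercing G 𝓗) :
    AxaxFree 𝓗 :=
  stmt10_general n G hnoncross 𝓗 hconn hnp
end

section
/- Let G be a maximal outerplanar graph with outer cycle C, and let 𝓗, 𝓚 be families of connected subgraphs of G such that 𝓗 ∪ 𝓚 is non-piercing pairwise within each family. Then (C, 𝓗, 𝓚) satisfies the intersection property: if H ∈ 𝓗 and K ∈ 𝓚 admit four vertices h₁, k₁, h₂, k₂ in cyclic order on C with h₁, h₂ ∈ V(H) and k₁, k₂ ∈ V(K), then V(H) ∩ V(K) ≠ ∅. -/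
open scoped ENNReal

lemma cyc3_tri {n : ℕ} {a q b : Fin n} (h1 : a ≠ b) (h2 : q ≠ a) (h3 : q ≠ b) :
    Cyc3 a q b ∨ Cyc3 b q a := by
  rw [← Fin.val_ne_iff] at h1 h2 h3
  simp only [Cyc3, Fin.lt_def]; omega

lemma cyc3_excl {n : ℕ} {a q b : Fin n} (h : Cyc3 a q b) : ¬ Cyc3 b q a := by
  simp only [Cyc3, Fin.lt_def] at *; omega

lemma cyc4_parts {n : ℕ} {a b c d : Fin n} (h : Cyc4 a b c d) :
    Cyc3 a b c ∧ Cyc3 c d a ∧ a ≠ c := by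
  simp only [Cyc3, Cyc4, Fin.lt_def, ← Fin.val_ne_iff] at *; omega

lemma cyc4_comb {n : ℕ} {a b c d : Fin n} (h1 : Cyc3 a b c) (h2 : Cyc3 c d a)
    (hbd : b ≠ d) : Cyc4 a b c d := by
  rw [← Fin.val_ne_iff] at hbd
  simp only [Cyc3, Cyc4, Fin.lt_def] at *; omega

lemma cyc4_rot {n : ℕ} {a b c d : Fin n} (h : Cyc4 a b c d) :
    Cyc3 d a b ∧ Cyc3 b c d := by
  simp only [Cyc3, Cyc4, Fin.lt_def] at *; omega

lemma crossWalk {V : Type} {G : SimpleGraph V} (S : Set V) :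
    ∀ {u v : V} (_ : G.Walk u v), u ∈ S → v ∉ S →
      ∃ p q, G.Adj p q ∧ p ∈ S ∧ q ∉ S := by
  intro u v w
  induction w with
  | nil => intro h h'; exact absurd h h'
  | @cons u b v h w ih =>
    intro hu hv
    by_cases hb : b ∈ S
    · exact ih hb hv
    · exact ⟨u, b, h, hu, hb⟩

theorem stmt11 (n : ℕ) [NeZero n] (hn : 3 ≤ n) (G : SimpleGraph (Fin n))
    (hcycle : ∀ i : Fin n, G.Adj i (i + 1))
    (hnoncross : ∀ a b c d : Fin n, G.Adj a b → G.Adj c d → ¬ Cyc4 a c b d)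
    (𝓗 𝓚 : Set (Set (Fin n)))
    (hconnH : ∀ H ∈ 𝓗, (G.induce H).Connected)
    (hconnK : ∀ K ∈ 𝓚, (G.induce K).Connected)
    (hnpH : NonPiercing G 𝓗) (hnpK : NonPiercing G 𝓚) :
    ∀ H ∈ 𝓗, ∀ K ∈ 𝓚, ∀ h₁ k₁ h₂ k₂ : Fin n, Cyc4 h₁ k₁ h₂ k₂ →
      h₁ ∈ H → h₂ ∈ H → k₁ ∈ K → k₂ ∈ K → (H ∩ K).Nonempty := by
  intro H hH K hK h₁ k₁ h₂ k₂ hcyc hh₁ hh₂ hk₁ hk₂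
  by_contra hc
  have hdisj : ∀ z, z ∈ H → z ∈ K → False := fun z hzH hzK => hc ⟨z, hzH, hzK⟩
  obtain ⟨h₁k₁h₂, h₂k₂h₁, hne⟩ := cyc4_parts hcyc
  obtain ⟨wK⟩ : ((G.induce K)).Reachable ⟨k₁, hk₁⟩ ⟨k₂, hk₂⟩ :=
    (hconnK K hK).preconnected _ _
  obtain ⟨p, q, hpq, hp, hq⟩ :=
    crossWalk {w : ↥K | Cyc3 h₁ w.val h₂} wK h₁k₁h₂ (cyc3_excl h₂k₂h₁)
  have hxy : G.Adj p.val q.val := hpq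
  have hy2 : Cyc3 h₂ q.val h₁ := by
    have e1 : q.val ≠ h₁ := fun e => hdisj h₁ hh₁ (e ▸ q.2)
    have e2 : q.val ≠ h₂ := fun e => hdisj h₂ hh₂ (e ▸ q.2)
    rcases cyc3_tri hne e1 e2 with h | h
    · exact absurd h hq
    · exact h
  have hc4 : Cyc4 h₁ p.val h₂ q.val := cyc4_comb hp hy2 hxy.ne
  obtain ⟨hyh₁x, hxh₂y⟩ := cyc4_rot hc4
  obtain ⟨wH⟩ : ((G.induce H)).Reachable ⟨h₁, hh₁⟩ ⟨h₂, hh₂⟩ :=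
    (hconnH H hH).preconnected _ _
  obtain ⟨p', q', hpq', hp', hq'⟩ :=
    crossWalk {w : ↥H | Cyc3 q.val w.val p.val} wH hyh₁x (cyc3_excl hxh₂y)
  have hxy' : G.Adj p'.val q'.val := hpq'
  have hq'2 : Cyc3 p.val q'.val q.val := by
    have e1 : q'.val ≠ q.val := fun e => hdisj q'.val q'.2 (e ▸ q.2)
    have e2 : q'.val ≠ p.val := fun e => hdisj q'.val q'.2 (e ▸ p.2)
    rcases cyc3_tri hxy.ne.symm e1 e2 with h | h
    · exact absurd h hq'
    · exact h
  exact hnoncross p.val q.val q'.val p'.val hxy hxy'.symm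
    (cyc4_comb hq'2 hp' hxy'.ne.symm)
end

section
/- Let C be a cycle with vertices in cyclic order, 𝓗 a family of subsets of V(C) that is axax-free, H₀ ∈ 𝓗, and u, v two non-consecutive vertices of C with u, v ∈ H₀. Then every H' ∈ 𝓗 that contains a vertex strictly inside the arc from u to v and a vertex strictly inside the arc from v to u must contain u or v. Moreover, if H₀ contains no vertex strictly inside the arc from u to v, then for any such H', the intersection of H' with the closed arc from v to u is contained in the intersection of H₀ with that arc. -/
open scoped ENNReal

lemma cyc34 {n : ℕ} {u a v b : Fin n} (h1 : Cyc3 u a v) (h2 : Cyc3 v b u) :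
    Cyc4 u a v b := by
  unfold Cyc3 Cyc4 at *
  simp only [Fin.lt_def] at *
  omega

lemma cyc_rot {n : ℕ} {a b c d : Fin n} (h : Cyc4 a b c d) : Cyc4 b c d a := by
  unfold Cyc4 at *; tauto

theorem stmt12 (n : ℕ) [NeZero n] (𝓗 : Set (Set (Fin n))) (hax : AxaxFree 𝓗)
    (H₀ : Set (Fin n)) (hH₀ : H₀ ∈ 𝓗) (u v : Fin n)
    (huv : u ≠ v) (hcons1 : v ≠ u + 1) (hcons2 : u ≠ v + 1)
    (hu : u ∈ H₀) (hv : v ∈ H₀) :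
    (∀ H' ∈ 𝓗, (H' ∩ arcO u v).Nonempty → (H' ∩ arcO v u).Nonempty →
      u ∈ H' ∨ v ∈ H') ∧
    (H₀ ∩ arcO u v = ∅ →
      ∀ H' ∈ 𝓗, (H' ∩ arcO u v).Nonempty → (H' ∩ arcO v u).Nonempty →
        H' ∩ arcC v u ⊆ H₀ ∩ arcC v u) := by
  constructor
  · rintro H' hH' ⟨x₁, hx₁H, hx₁⟩ ⟨x₂, hx₂H, hx₂⟩
    by_contra h
    push_neg at h
    exact hax ⟨H₀, hH₀, H', hH', u, x₁, v, x₂, cyc34 hx₁ hx₂,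
      ⟨hu, h.1⟩, ⟨hv, h.2⟩, hx₁H, hx₂H⟩
  · rintro hemp H' hH' ⟨x₁, hx₁H, hx₁⟩ ⟨x₂, hx₂H, hx₂⟩ w ⟨hwH', hwarc⟩
    by_cases hw : w ∈ H₀
    · exact ⟨hw, hwarc⟩
    exfalso
    have hwo : w ∈ arcO v u := by
      rcases hwarc with (h | h) | h
      · simp only [Set.mem_singleton_iff] at h; subst h; exact (hw hv).elim
      · simp only [Set.mem_singleton_iff] at h; subst h; exact (hw hu).elim
      · exact h
    have hx₁n : x₁ ∉ H₀ := fun hc =>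
      Set.eq_empty_iff_forall_notMem.mp hemp x₁ ⟨hc, hx₁⟩
    exact hax ⟨H', hH', H₀, hH₀, x₁, v, w, u, cyc_rot (cyc34 hx₁ hwo),
      ⟨hx₁H, hx₁n⟩, ⟨hwH', hw⟩, hv, hu⟩
end

section
/- Let C be a cycle and 𝓗, 𝓚 families of subsets of V(C), each inducing a single arc (run) of consecutive vertices on C, such that 𝓗 is strict-containment free (no H ∈ 𝓗 is contained in another H' ∈ 𝓗 with both endpoints strictly inside). Then the cycle C(𝓗) on the set 𝓗, ordered lexicographically by (start vertex, end vertex) in cyclic order, is a support: for each K ∈ 𝓚, the set {H ∈ 𝓗 : H ∩ K ≠ ∅} forms a set of consecutive vertices on C(𝓗) and hence induces a connected subgraph. -/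
open scoped ENNReal

/- ============ auxiliary lemmas ============ -/

lemma relpos_spec {n : ℕ} [NeZero n] (a b : Fin n) :
    relpos a b = if b.val ≤ a.val then a.val - b.val else a.val + n - b.val := by
  have ha := a.isLt; have hb := b.isLt
  unfold relpos
  split_ifs with h
  · have h2 : a.val + n - b.val = (a.val - b.val) + n := by omega
    rw [h2, Nat.add_mod_right, Nat.mod_eq_of_lt (by omega)]
  · exact Nat.mod_eq_of_lt (by omega)

lemma mem_arcC {n : ℕ} [NeZero n] (w u v : Fin n) :
    w ∈ arcC u v ↔ relpos w u ≤ relpos v u := by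
  have hw := w.isLt; have hu := u.isLt; have hv := v.isLt
  simp only [arcC, Cyc3, Set.mem_union, Set.mem_singleton_iff, Set.mem_setOf_eq,
    relpos_spec, Fin.lt_def, Fin.ext_iff]
  split_ifs <;> omega

/-- the "hit" predicate, arithmetically. -/
def HitA {n m : ℕ} (s t : Fin m → Fin n) (a b : Fin n) (k : Fin m) : Prop :=
  relpos (s k) a ≤ relpos b a ∨ n ≤ relpos (s k) a + relpos (t k) (s k)

/-- the lexicographic (start-measured-from-`a`, length) preorder. -/
def RelA {n m : ℕ} (s t : Fin m → Fin n) (a : Fin n) (p q : Fin m) : Prop :=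
  relpos (s p) a < relpos (s q) a ∨
    (relpos (s p) a = relpos (s q) a ∧ relpos (t p) (s p) ≤ relpos (t q) (s q))

lemma NP_aux {n : ℕ} [NeZero n] (sq sr tq tr a : Fin n)
    (h1 : relpos sq a < relpos sr a)
    (h2 : n ≤ relpos sq a + relpos tq sq)
    (h3 : relpos sr a + relpos tr sr < n) :
    0 < relpos sr sq ∧ relpos sr sq ≤ relpos tr sq ∧ relpos tr sq < relpos tq sq := by
  have e1 := sq.isLt; have e2 := sr.isLt; have e3 := tq.isLt
  have e4 := tr.isLt; have e5 := a.isLt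
  simp only [relpos_spec] at h1 h2 h3 ⊢
  split_ifs at h1 h2 h3 ⊢ <;> omega

lemma Fsame_aux {n : ℕ} [NeZero n] (sk sl tk tl a : Fin n)
    (h : sk.val < sl.val ∨ (sk.val = sl.val ∧ relpos tk sk ≤ relpos tl sl))
    (hb : a.val ≤ sk.val ↔ a.val ≤ sl.val) :
    relpos sk a < relpos sl a ∨
      (relpos sk a = relpos sl a ∧ relpos tk sk ≤ relpos tl sl) := by
  have e1 := sk.isLt; have e2 := sl.isLt; have e3 := a.isLt
  simp only [relpos_spec] at h ⊢
  split_ifs at h ⊢ <;> omega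

lemma FBA_aux {n : ℕ} [NeZero n] (sk sl a : Fin n)
    (h1 : a.val ≤ sk.val) (h2 : ¬ a.val ≤ sl.val) :
    relpos sk a < relpos sl a := by
  have e1 := sk.isLt; have e2 := sl.isLt; have e3 := a.isLt
  simp only [relpos_spec]
  split_ifs <;> omega

/-- A set with no linear in-out-in pattern is a cyclic interval. -/
lemma cycInterval_of_no_ioi {m : ℕ} (S : Set (Fin m))
    (h : ∀ p q r : Fin m, p < q → q < r → p ∈ S → q ∉ S → r ∈ S → False) :
    CycInterval S := by
  rcases S.eq_empty_or_nonempty with he | ⟨x, hx⟩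
  · exact Or.inl he
  haveI : NeZero m := ⟨x.pos.ne'⟩
  obtain ⟨i, hiS, hmin⟩ := Set.exists_min_image S Fin.val (Set.toFinite S) ⟨x, hx⟩
  obtain ⟨j, hjS, hmax⟩ := Set.exists_max_image S Fin.val (Set.toFinite S) ⟨x, hx⟩
  have hij : i.val ≤ j.val := hmin j hjS
  right
  refine ⟨i, j, Set.ext fun k => ?_⟩
  rw [mem_arcC, relpos_spec, relpos_spec]
  have hi := i.isLt; have hj := j.isLt; have hk := k.isLt
  constructor
  · intro hkS
    have h1 : i.val ≤ k.val := hmin k hkS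
    have h2 : k.val ≤ j.val := hmax k hkS
    split_ifs <;> omega
  · intro hrel
    by_contra hkS
    have h1 : i.val ≤ k.val ∧ k.val ≤ j.val := by split_ifs at hrel <;> omega
    have hki : k.val ≠ i.val := fun hv => hkS ((Fin.ext hv : k = i) ▸ hiS)
    have hkj : k.val ≠ j.val := fun hv => hkS ((Fin.ext hv : k = j) ▸ hjS)
    exact h i k j (by rw [Fin.lt_def]; omega) (by rw [Fin.lt_def]; omega) hiS hkS hjS

/-- A set with no linear out-in-out pattern is a cyclic interval. -/
lemma cycInterval_of_no_oio {m : ℕ} (S : Set (Fin m))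
    (h : ∀ p q r : Fin m, p < q → q < r → p ∉ S → q ∈ S → r ∉ S → False) :
    CycInterval S := by
  rcases S.eq_empty_or_nonempty with he | ⟨x, hx⟩
  · exact Or.inl he
  have hm : 0 < m := x.pos
  haveI : NeZero m := ⟨hm.ne'⟩
  rcases Sᶜ.eq_empty_or_nonempty with hc | ⟨y, hy⟩
  · -- S = univ
    right
    refine ⟨⟨0, hm⟩, ⟨m - 1, by omega⟩, Set.ext fun k => ?_⟩
    have hkS : k ∈ S := by
      by_contra hk
      exact (Set.eq_empty_iff_forall_notMem.mp hc k) hk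
    have hk := k.isLt
    rw [mem_arcC, relpos_spec, relpos_spec]
    simp only [Fin.val_mk]
    constructor
    · intro _; split_ifs <;> omega
    · intro _; exact hkS
  · obtain ⟨i, hiC, hmin⟩ := Set.exists_min_image Sᶜ Fin.val (Set.toFinite _) ⟨y, hy⟩
    obtain ⟨j, hjC, hmax⟩ := Set.exists_max_image Sᶜ Fin.val (Set.toFinite _) ⟨y, hy⟩
    have hij : i.val ≤ j.val := hmin j hjC
    have hi := i.isLt; have hj := j.isLt
    -- everything between i and j is outside S
    have hIv : ∀ k : Fin m, i.val ≤ k.val → k.val ≤ j.val → k ∉ S := by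
      intro k h1 h2 hkS
      have hki : k.val ≠ i.val := fun hv => hiC ((Fin.ext hv : k = i) ▸ hkS)
      have hkj : k.val ≠ j.val := fun hv => hjC ((Fin.ext hv : k = j) ▸ hkS)
      exact h i k j (by rw [Fin.lt_def]; omega) (by rw [Fin.lt_def]; omega) hiC hkS hjC
    have hS : ∀ k : Fin m, k ∈ S ↔ (k.val < i.val ∨ j.val < k.val) := by
      intro k
      constructor
      · intro hkS
        by_contra hcon
        push_neg at hcon
        exact hIv k hcon.1 hcon.2 hkS
      · intro hk
        by_contra hkS
        have h1 : i.val ≤ k.val := hmin k hkS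
        have h2 : k.val ≤ j.val := hmax k hkS
        omega
    right
    have hk' : ∀ (u v : Fin m), (∀ k : Fin m, (k.val < i.val ∨ j.val < k.val) ↔
        (relpos k u ≤ relpos v u)) → S = arcC u v := by
      intro u v huv
      refine Set.ext fun k => ?_
      rw [hS k, mem_arcC]
      exact huv k
    by_cases hjm : j.val + 1 = m
    · by_cases hi0 : i.val = 0
      · exfalso
        have hx' := x.isLt
        exact hIv x (by omega) (by omega) hx
      · refine ⟨⟨0, hm⟩, ⟨i.val - 1, by omega⟩, hk' _ _ fun k => ?_⟩
        have hk := k.isLt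
        rw [relpos_spec, relpos_spec]
        simp only [Fin.val_mk]
        split_ifs <;> omega
    · by_cases hi0 : i.val = 0
      · refine ⟨⟨j.val + 1, by omega⟩, ⟨m - 1, by omega⟩, hk' _ _ fun k => ?_⟩
        have hk := k.isLt
        rw [relpos_spec, relpos_spec]
        simp only [Fin.val_mk]
        split_ifs <;> omega
      · refine ⟨⟨j.val + 1, by omega⟩, ⟨i.val - 1, by omega⟩, hk' _ _ fun k => ?_⟩
        have hk := k.isLt
        rw [relpos_spec, relpos_spec]
        simp only [Fin.val_mk]
        split_ifs <;> omega

theorem stmt13 (n m : ℕ) [NeZero n] (e : Fin m → Set (Fin n))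
    (he : Function.Injective e)
    (s t : Fin m → Fin n) (hrun : ∀ k, e k = arcC (s k) (t k))
    (hsort : ∀ k l : Fin m, k < l →
      lexLe ((s k).val, relpos (t k) (s k)) ((s l).val, relpos (t l) (s l)))
    (hscf : ∀ k l : Fin m, ¬ (0 < relpos (s k) (s l) ∧
      relpos (s k) (s l) ≤ relpos (t k) (s l) ∧
      relpos (t k) (s l) < relpos (t l) (s l)))
    (𝓚 : Set (Set (Fin n))) (hK : ∀ K ∈ 𝓚, ∃ a b : Fin n, K = arcC a b) :
    ∀ K ∈ 𝓚, CycInterval {k : Fin m | (e k ∩ K).Nonempty} := by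
  intro K hKmem
  obtain ⟨a, b, rfl⟩ := hK K hKmem
  -- sorted-order fact, unfolded
  have hsv : ∀ k l : Fin m, k < l →
      (s k).val < (s l).val ∨
        ((s k).val = (s l).val ∧ relpos (t k) (s k) ≤ relpos (t l) (s l)) := by
    intro k l hkl
    simpa [lexLe] using hsort k l hkl
  -- hit characterization
  have hHit : ∀ k : Fin m, (e k ∩ arcC a b).Nonempty ↔ HitA s t a b k := by
    intro k
    rw [hrun k]
    constructor
    · rintro ⟨w, hw1, hw2⟩
      rw [mem_arcC] at hw1 hw2
      have e1 := (s k).isLt; have e2 := (t k).isLt; have e3 := a.isLt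
      have e4 := b.isLt; have e5 := w.isLt
      unfold HitA
      simp only [relpos_spec] at hw1 hw2 ⊢
      split_ifs at hw1 hw2 ⊢ <;> omega
    · intro h
      rcases h with h | h
      · refine ⟨s k, (mem_arcC _ _ _).mpr ?_, (mem_arcC _ _ _).mpr h⟩
        have e1 := (s k).isLt; have e2 := (t k).isLt
        simp only [relpos_spec]
        split_ifs <;> omega
      · refine ⟨a, (mem_arcC _ _ _).mpr ?_, (mem_arcC _ _ _).mpr ?_⟩
        · have e1 := (s k).isLt; have e2 := (t k).isLt; have e3 := a.isLt
          simp only [relpos_spec] at h ⊢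
          split_ifs at h ⊢ <;> omega
        · have e3 := a.isLt; have e4 := b.isLt
          simp only [relpos_spec]
          split_ifs <;> omega
  -- the no-pattern core lemma
  have hNP : ∀ p q r : Fin m, RelA s t a p q → RelA s t a q r →
      ¬ HitA s t a b p → HitA s t a b q → ¬ HitA s t a b r → False := by
    intro p q r hpq hqr hp hq hr
    simp only [HitA, not_or, not_le, not_lt] at hp hr
    have hpq' : relpos (s p) a ≤ relpos (s q) a := by
      rcases hpq with h' | ⟨h', _⟩ <;> omega
    have hq2 : n ≤ relpos (s q) a + relpos (t q) (s q) := by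
      rcases hq with hq' | hq'
      · exact absurd hq' (by omega)
      · exact hq'
    rcases hqr with hqr | ⟨hqr1, hqr2⟩
    · exact hscf r q (NP_aux (s q) (s r) (t q) (t r) a hqr hq2 hr.2)
    · omega
  -- ordering facts
  have hmono : ∀ k l : Fin m, k < l → a.val ≤ (s k).val → a.val ≤ (s l).val := by
    intro k l hkl hb
    rcases hsv k l hkl with h' | ⟨h', _⟩ <;> omega
  have hsame : ∀ k l : Fin m, k < l → ((a.val ≤ (s k).val) ↔ (a.val ≤ (s l).val)) →
      RelA s t a k l := by
    intro k l hkl hb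
    exact Fsame_aux (s k) (s l) (t k) (t l) a (hsv k l hkl) hb
  have hBA : ∀ k l : Fin m, a.val ≤ (s k).val → ¬ a.val ≤ (s l).val → RelA s t a k l :=
    fun k l h1 h2 => Or.inl (FBA_aux (s k) (s l) a h1 h2)
  -- no alternation of type Hit, ¬Hit, Hit, ¬Hit
  have noP1 : ∀ k1 k2 k3 k4 : Fin m, k1 < k2 → k2 < k3 → k3 < k4 →
      HitA s t a b k1 → ¬ HitA s t a b k2 → HitA s t a b k3 → ¬ HitA s t a b k4 →
      False := by
    intro k1 k2 k3 k4 h12 h23 h34 H1 H2 H3 H4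
    by_cases hb2 : a.val ≤ (s k2).val
    · have hb3 := hmono _ _ h23 hb2
      have hb4 := hmono _ _ h34 hb3
      exact hNP k2 k3 k4 (hsame _ _ h23 (iff_of_true hb2 hb3))
        (hsame _ _ h34 (iff_of_true hb3 hb4)) H2 H3 H4
    · by_cases hb4 : a.val ≤ (s k4).val
      · have hb1 : ¬ a.val ≤ (s k1).val := fun h' => hb2 (hmono _ _ h12 h')
        exact hNP k4 k1 k2 (hBA k4 k1 hb4 hb1)
          (hsame _ _ h12 (iff_of_false hb1 hb2)) H4 H1 H2
      · have hb3 : ¬ a.val ≤ (s k3).val := fun h' => hb4 (hmono _ _ h34 h')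
        exact hNP k2 k3 k4 (hsame _ _ h23 (iff_of_false hb2 hb3))
          (hsame _ _ h34 (iff_of_false hb3 hb4)) H2 H3 H4
  -- no alternation of type ¬Hit, Hit, ¬Hit, Hit
  have noP2 : ∀ k1 k2 k3 k4 : Fin m, k1 < k2 → k2 < k3 → k3 < k4 →
      ¬ HitA s t a b k1 → HitA s t a b k2 → ¬ HitA s t a b k3 → HitA s t a b k4 →
      False := by
    intro k1 k2 k3 k4 h12 h23 h34 H1 H2 H3 H4
    by_cases hb1 : a.val ≤ (s k1).val
    · have hb2 := hmono _ _ h12 hb1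
      have hb3 := hmono _ _ h23 hb2
      exact hNP k1 k2 k3 (hsame _ _ h12 (iff_of_true hb1 hb2))
        (hsame _ _ h23 (iff_of_true hb2 hb3)) H1 H2 H3
    · by_cases hb3 : a.val ≤ (s k3).val
      · have hb4 := hmono _ _ h34 hb3
        exact hNP k3 k4 k1 (hsame _ _ h34 (iff_of_true hb3 hb4))
          (hBA k4 k1 hb4 hb1) H3 H4 H1
      · have hb2 : ¬ a.val ≤ (s k2).val := fun h' => hb3 (hmono _ _ h23 h')
        exact hNP k1 k2 k3 (hsame _ _ h12 (iff_of_false hb1 hb2))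
          (hsame _ _ h23 (iff_of_false hb2 hb3)) H1 H2 H3
  have hset : {k : Fin m | (e k ∩ arcC a b).Nonempty} = {k : Fin m | HitA s t a b k} :=
    Set.ext fun k => hHit k
  rw [hset]
  by_cases hio : ∃ p q r : Fin m, p < q ∧ q < r ∧
      HitA s t a b p ∧ ¬ HitA s t a b q ∧ HitA s t a b r
  · apply cycInterval_of_no_oio
    intro p' q' r' h1 h2 hp' hq' hr'
    obtain ⟨p, q, r, hpq, hqr, hp, hq, hr⟩ := hio
    rcases lt_trichotomy q q' with hlt | heq | hgt
    · exact noP1 p q q' r' hpq hlt h2 hp hq hq' hr'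
    · exact hq (heq ▸ hq')
    · exact noP2 p' q' q r h1 hgt hqr hp' hq' hq hr
  · apply cycInterval_of_no_ioi
    intro p q r h1 h2 hp hq hr
    exact hio ⟨p, q, r, h1, h2, hp, hq, hr⟩
end
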